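/- Let C₆ = C₁₀^⊥ = {x ∈ 𝔽₂^{4×4} : Σ_{i,j} x(i,j)·c(i,j) = 0 for all c ∈ C₁₀} be the dual code of C₁₀. Then: C₆ ⊆ C₁₀; C₆ is an 𝔽₂-linear subspace of dimension 6 (so |C₆| = 64); every nonzero element of C₆ has Hamming weight at least 6 (i.e., C₆ has minimum distance 6); and C₆ contains exactly 16 elements of weight 6, exactly 30 elements of weight 8, exactly 16 elements of weight 10, the zero matrix, and the all-ones matrix. -/
import Mathlib

def C10 : Set (Fin 4 × Fin 4 → ZMod 2) :=
  {m | ∃ s : ZMod 2, (∀ i : Fin 4, ∑ j : Fin 4, m (i, j) = s) ∧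
        (∀ j : Fin 4, ∑ i : Fin 4, m (i, j) = s)}

def C6 : Set (Fin 4 × Fin 4 → ZMod 2) :=
  {x | ∀ c ∈ C10, (∑ p : Fin 4 × Fin 4, x p * c p) = 0}

def Rect (i j : Fin 4) : Fin 4 × Fin 4 → ZMod 2 := fun p =>
  ((if p.1 = i then 1 else 0) + (if p.1 = 0 then 1 else 0)) *
    ((if p.2 = j then 1 else 0) + (if p.2 = 0 then 1 else 0))

lemma Rect_mem (i j : Fin 4) : Rect i j ∈ C10 := by
  refine ⟨0, ?_, ?_⟩
  · intro k
    have : ∀ l : Fin 4, Rect i j (k, l) =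
        ((if k = i then 1 else 0) + (if k = 0 then 1 else 0)) *
          ((if l = j then (1:ZMod 2) else 0) + (if l = 0 then 1 else 0)) := fun l => rfl
    simp only [this, ← Finset.mul_sum, Finset.sum_add_distrib]
    simp only [Finset.sum_ite_eq', Finset.mem_univ, if_true]
    exact mul_eq_zero_of_right _ (by decide)
  · intro l
    have : ∀ k : Fin 4, Rect i j (k, l) =
        ((if k = i then 1 else 0) + (if k = 0 then 1 else 0)) *
          ((if l = j then (1:ZMod 2) else 0) + (if l = 0 then 1 else 0)) := fun k => rfl
    simp only [this, ← Finset.sum_mul, Finset.sum_add_distrib]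
    simp only [Finset.sum_ite_eq', Finset.mem_univ, if_true]
    exact mul_eq_zero_of_left (by decide) _

def RC : Fin 4 × Fin 4 → ZMod 2 := fun p =>
  (if p.1 = 0 then 1 else 0) + (if p.2 = 0 then 1 else 0)

lemma RC_mem : RC ∈ C10 := by
  refine ⟨1, ?_, ?_⟩ <;> intro k <;> fin_cases k <;> decide

lemma char2 : ∀ u v w z : ZMod 2, u + w + (v + z) = 0 → u = v + z + w := by decide

lemma sum_eq (x : Fin 4 × Fin 4 → ZMod 2) (hx : x ∈ C6) :
    (∑ i : Fin 4, (x (i, 0) + x (0, 0))) = ∑ j : Fin 4, x (0, j) := by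
  have h := hx RC RC_mem
  rw [Fintype.sum_prod_type] at h
  simp only [RC, mul_add, mul_ite, mul_one, mul_zero, Finset.sum_add_distrib,
    Finset.sum_ite_eq', Finset.mem_univ, if_true] at h
  simp only [Finset.sum_add_distrib, Fin.sum_univ_four] at h ⊢
  simp only [Fin.isValue, show ((1:Fin 4) = 0) = False from eq_false (by decide),
    show ((2:Fin 4) = 0) = False from eq_false (by decide),
    show ((3:Fin 4) = 0) = False from eq_false (by decide), if_false, if_true, add_zero] at h
  have h2 : (2 : ZMod 2) = 0 := by decide
  linear_combination h + (2 * x (0,0) - (x (0,0) + x (0,1) + x (0,2) + x (0,3))) * h2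

lemma mem_C6_iff (x : Fin 4 × Fin 4 → ZMod 2) :
    x ∈ C6 ↔ ∃ a b : Fin 4 → ZMod 2,
      (∑ i, a i) = (∑ j, b j) ∧ x = fun p => a p.1 + b p.2 := by
  constructor
  · intro hx
    refine ⟨fun i => x (i, 0) + x (0, 0), fun j => x (0, j), ?_, ?_⟩
    · exact sum_eq x hx
    · funext p
      have h := hx (Rect p.1 p.2) (Rect_mem p.1 p.2)
      rw [Fintype.sum_prod_type] at h
      simp only [Rect, mul_add, add_mul, mul_ite, ite_mul, mul_one, mul_zero, one_mul, zero_mul,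
        Finset.sum_add_distrib, Finset.sum_ite_eq', Finset.mem_univ, if_true] at h
      exact char2 _ _ _ _ h
  · rintro ⟨a, b, hab, rfl⟩ c ⟨s, hr, hc⟩
    rw [Fintype.sum_prod_type]
    have expand : ∀ k l : Fin 4, (a (k, l).1 + b (k, l).2) * c (k, l)
        = a k * c (k, l) + b l * c (k, l) := fun k l => add_mul _ _ _
    simp only [expand, Finset.sum_add_distrib, ← Finset.mul_sum]
    rw [Finset.sum_comm (f := fun k l => b l * c (k, l))]
    simp only [← Finset.mul_sum, hr, hc, ← Finset.sum_mul, hab]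
    rw [← add_mul]
    exact mul_eq_zero_of_left (by exact CharTwo.add_self_eq_zero _) _

lemma four_smul : ∀ v : ZMod 2, (4 : ℕ) • v = 0 := by decide

lemma C6_subset_C10 : C6 ⊆ C10 := by
  intro x hx
  rw [mem_C6_iff] at hx
  obtain ⟨a, b, hab, rfl⟩ := hx
  refine ⟨∑ j, b j, ?_, ?_⟩
  · intro i
    simp only [Finset.sum_add_distrib, Finset.sum_const, Finset.card_univ,
      Fintype.card_fin, four_smul, zero_add]
  · intro j
    simp only [Finset.sum_add_distrib, Finset.sum_const, Finset.card_univ,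
      Fintype.card_fin, four_smul, add_zero, hab]

def phi (ab : (Fin 4 → ZMod 2) × (Fin 4 → ZMod 2)) : Fin 4 × Fin 4 → ZMod 2 :=
  fun p => ab.1 p.1 + ab.2 p.2

def Dom0 : Finset ((Fin 4 → ZMod 2) × (Fin 4 → ZMod 2)) :=
  Finset.univ.filter (fun ab => ab.1 0 = 0 ∧ (∑ i, ab.1 i) = ∑ j, ab.2 j)

def S : Finset (Fin 4 × Fin 4 → ZMod 2) := Dom0.image phi

lemma sum_ones : (∑ _i : Fin 4, (1 : ZMod 2)) = 0 := by decide

lemma C6_eq : C6 = ↑S := by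
  ext x
  rw [mem_C6_iff]
  constructor
  · rintro ⟨a, b, hab, rfl⟩
    by_cases h : a 0 = 0
    · exact Finset.mem_coe.2 (Finset.mem_image.2 ⟨(a, b),
        Finset.mem_filter.2 ⟨Finset.mem_univ _, h, hab⟩, rfl⟩)
    · have h1 : a 0 = 1 := by
        have : ∀ v : ZMod 2, v ≠ 0 → v = 1 := by decide
        exact this _ h
      refine Finset.mem_coe.2 (Finset.mem_image.2 ⟨(fun i => a i + 1, fun j => b j + 1),
        Finset.mem_filter.2 ⟨Finset.mem_univ _, ?_, ?_⟩, ?_⟩)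
      · show a 0 + 1 = 0
        rw [h1]; decide
      · simp only [Finset.sum_add_distrib, sum_ones, add_zero, hab]
      · funext p
        show a p.1 + 1 + (b p.2 + 1) = a p.1 + b p.2
        have : ∀ u v : ZMod 2, u + 1 + (v + 1) = u + v := by decide
        exact this _ _
  · intro hx
    obtain ⟨⟨a, b⟩, hmem, rfl⟩ := Finset.mem_image.1 (Finset.mem_coe.1 hx)
    obtain ⟨-, -, hab⟩ := Finset.mem_filter.1 hmem
    exact ⟨a, b, hab, rfl⟩

lemma phi_injOn : Set.InjOn phi ↑Dom0 := by
  rintro ⟨a, b⟩ h ⟨a', b'⟩ h' heq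
  obtain ⟨-, ha0, -⟩ := Finset.mem_filter.1 (Finset.mem_coe.1 h)
  obtain ⟨-, ha0', -⟩ := Finset.mem_filter.1 (Finset.mem_coe.1 h')
  have hb : b = b' := by
    funext j
    have := congrFun heq (0, j)
    simp only [phi] at this
    linear_combination this - ha0 + ha0'
  have ha : a = a' := by
    funext i
    have := congrFun heq (i, 0)
    simp only [phi] at this
    rw [hb] at this
    exact add_right_cancel this
  rw [ha, hb]

set_option maxRecDepth 1000000 in
lemma Dom0_card : Dom0.card = 64 := by decide

lemma S_card : S.card = 64 := by
  rw [S, Finset.card_image_of_injOn phi_injOn, Dom0_card]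

set_option maxRecDepth 1000000 in
lemma Dom0_w6 : (Dom0.filter fun ab => hammingNorm (phi ab) = 6).card = 16 := by decide

set_option maxRecDepth 1000000 in
lemma Dom0_w8 : (Dom0.filter fun ab => hammingNorm (phi ab) = 8).card = 30 := by decide

set_option maxRecDepth 1000000 in
lemma Dom0_w10 : (Dom0.filter fun ab => hammingNorm (phi ab) = 10).card = 16 := by decide

set_option maxRecDepth 1000000 in
lemma Dom0_min : ∀ ab ∈ Dom0, phi ab ≠ 0 → 6 ≤ hammingNorm (phi ab) := by decide

lemma S_filter_card (P : (Fin 4 × Fin 4 → ZMod 2) → Prop) [DecidablePred P] :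
    (S.filter P).card = (Dom0.filter fun ab => P (phi ab)).card := by
  rw [S, Finset.filter_image,
    Finset.card_image_of_injOn (phi_injOn.mono (by exact_mod_cast Finset.filter_subset _ _))]

lemma weight_set_eq (n : ℕ) :
    {x : Fin 4 × Fin 4 → ZMod 2 | x ∈ C6 ∧ hammingNorm x = n} =
      ↑(S.filter fun x => hammingNorm x = n) := by
  ext x
  simp [C6_eq, Set.mem_setOf_eq, Finset.mem_coe, Finset.mem_filter]

def M6 : Submodule (ZMod 2) (Fin 4 × Fin 4 → ZMod 2) where
  carrier := C6
  zero_mem' := by intro c _; simp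
  add_mem' := by
    intro x y hx hy c hc
    have : ∀ p : Fin 4 × Fin 4, (x + y) p * c p = x p * c p + y p * c p := by
      intro p; simp [add_mul]
    simp only [this, Finset.sum_add_distrib, hx c hc, hy c hc, add_zero]
  smul_mem' := by
    intro r x hx c hc
    have : ∀ p : Fin 4 × Fin 4, (r • x) p * c p = r * (x p * c p) := by
      intro p; simp [mul_assoc]
    simp only [this, ← Finset.mul_sum, hx c hc, mul_zero]

lemma card_C6 : Nat.card C6 = 64 := by
  rw [C6_eq, Nat.card_coe_set_eq, Set.ncard_coe_finset, S_card]

lemma finrank_M6 : Module.finrank (ZMod 2) M6 = 6 := by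
  have hfin : Fintype M6 := Fintype.ofFinite _
  have h1 : Fintype.card M6 = Fintype.card (ZMod 2) ^ Module.finrank (ZMod 2) M6 :=
    Module.card_eq_pow_finrank
  have h2 : Fintype.card M6 = 64 := by
    rw [← Nat.card_eq_fintype_card]
    have : Nat.card M6 = Nat.card C6 := rfl
    rw [this, card_C6]
  rw [h2, ZMod.card] at h1
  have : (2:ℕ) ^ Module.finrank (ZMod 2) M6 = 2 ^ 6 := h1.symm
  exact Nat.pow_right_injective (by norm_num) this

theorem C6_properties :
    C6 ⊆ C10 ∧
    (∃ M : Submodule (ZMod 2) (Fin 4 × Fin 4 → ZMod 2),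
      (↑M : Set (Fin 4 × Fin 4 → ZMod 2)) = C6 ∧ Module.finrank (ZMod 2) M = 6) ∧
    Nat.card C6 = 64 ∧
    (∀ x ∈ C6, x ≠ 0 → 6 ≤ hammingNorm x) ∧
    Nat.card {x : Fin 4 × Fin 4 → ZMod 2 | x ∈ C6 ∧ hammingNorm x = 6} = 16 ∧
    Nat.card {x : Fin 4 × Fin 4 → ZMod 2 | x ∈ C6 ∧ hammingNorm x = 8} = 30 ∧
    Nat.card {x : Fin 4 × Fin 4 → ZMod 2 | x ∈ C6 ∧ hammingNorm x = 10} = 16 ∧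
    (0 : Fin 4 × Fin 4 → ZMod 2) ∈ C6 ∧
    (fun _ : Fin 4 × Fin 4 => (1 : ZMod 2)) ∈ C6 := by
  refine ⟨C6_subset_C10, ⟨M6, rfl, finrank_M6⟩, card_C6, ?_, ?_, ?_, ?_, ?_, ?_⟩
  · intro x hx hne
    rw [C6_eq] at hx
    obtain ⟨ab, hmem, rfl⟩ := Finset.mem_image.1 (Finset.mem_coe.1 hx)
    exact Dom0_min ab hmem hne
  · rw [weight_set_eq, Nat.card_coe_set_eq, Set.ncard_coe_finset, S_filter_card, Dom0_w6]
  · rw [weight_set_eq, Nat.card_coe_set_eq, Set.ncard_coe_finset, S_filter_card, Dom0_w8]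
  · rw [weight_set_eq, Nat.card_coe_set_eq, Set.ncard_coe_finset, S_filter_card, Dom0_w10]
  · rw [mem_C6_iff]
    exact ⟨0, 0, rfl, by funext p; simp⟩
  · rw [mem_C6_iff]
    exact ⟨0, fun _ => 1, by decide, by funext p; simp⟩
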